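/- Let s ∈ ℝ with |s| ≤ M, y ∈ {0,1}, and ν ∈ ℝ with |ν| ≤ M. Then y·(s − ν) ≥ 0 holds if and only if there exists u ∈ ℝ satisfying u ≥ νy, u ≤ yM, u ≥ −yM, u ≤ s + (1−y)M, and u ≥ s − (1−y)M. -/
import Mathlib

/-- Exactness of the Fortet linearization of y(s − ν) ≥ 0. -/
theorem stmt_8 (s y M ν : ℝ) (hy : y = 0 ∨ y = 1) (hs : |s| ≤ M) (hν : |ν| ≤ M) :
    y * (s - ν) ≥ 0 ↔
      ∃ u : ℝ, u ≥ ν * y ∧ u ≤ y * M ∧ u ≥ -(y * M) ∧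
        u ≤ s + (1 - y) * M ∧ u ≥ s - (1 - y) * M := by
  rw [abs_le] at hs hν
  rcases hy with h | h <;> subst h
  · constructor
    · intro _; exact ⟨0, by norm_num; constructor <;> linarith⟩
    · intro _; simp
  · constructor
    · intro h; refine ⟨s, by nlinarith, by linarith, by linarith, by linarith, by linarith⟩
    · rintro ⟨u, h1, h2, h3, h4, h5⟩; nlinarith
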